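/- arXiv:2403.00609 — 4 statements merged into one kernel-verified Lean document; each statement's English description precedes it below -/
import Mathlib

section
/- Let μ > 0, β > 0 and α > γ > 0. If (a,b,c) ∈ ℝ³ with a > 0, b > 0, c > 0 satisfies the algebraic system μ·a·(1−a) = β·α·a·b + β·γ·a·c, μ·b·(1−b) = β·γ·a·b + β·α·b·c, and μ·c·(1−c) = β·α·a·c + β·γ·b·c, then a = b = c = μ/(μ + β·α + β·γ). In other words, (μ/(μ+βα+βγ))·(1,1,1) is the unique constant positive solution of the three-component competition system. -/
/-- The unique positive constant solution of the three-component competition system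
is `(μ/(μ+βα+βγ))·(1,1,1)`. -/
theorem unique_positive_constant_solution
    (μ β α γ a b c : ℝ) (hμ : 0 < μ) (hβ : 0 < β) (hγ : 0 < γ) (hαγ : γ < α)
    (ha : 0 < a) (hb : 0 < b) (hc : 0 < c)
    (h1 : μ * a * (1 - a) = β * α * a * b + β * γ * a * c)
    (h2 : μ * b * (1 - b) = β * γ * a * b + β * α * b * c)
    (h3 : μ * c * (1 - c) = β * α * a * c + β * γ * b * c) :
    a = μ / (μ + β * α + β * γ) ∧ b = μ / (μ + β * α + β * γ) ∧
      c = μ / (μ + β * α + β * γ) := by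
  set p : ℝ := β * α with hp
  set q : ℝ := β * γ with hq
  have e1 : μ * (1 - a) = p * b + q * c :=
    mul_left_cancel₀ ha.ne' (by linear_combination h1)
  have e2 : μ * (1 - b) = q * a + p * c :=
    mul_left_cancel₀ hb.ne' (by linear_combination h2)
  have e3 : μ * (1 - c) = p * a + q * b :=
    mul_left_cancel₀ hc.ne' (by linear_combination h3)
  have hpq : 0 < p - q := by
    have : 0 < β * (α - γ) := mul_pos hβ (by linarith)
    simp only [hp, hq]; nlinarith
  have hD : 0 < μ^2 + p^2 + q^2 - μ*p - μ*q - p*q := by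
    nlinarith [sq_nonneg (μ - p), sq_nonneg (μ - q), sq_nonneg (p - q), sq_nonneg (p-q), mul_pos hpq hpq]
  have hab : a = b := by
    have key : (μ^2 + p^2 + q^2 - μ*p - μ*q - p*q) * (a - b) = 0 := by
      linear_combination (p - μ) * e1 + (μ - q) * e2 + (q - p) * e3
    have := mul_eq_zero.mp key
    rcases this with h | h
    · linarith
    · linarith
  have hbc : b = c := by
    have key : (μ^2 + p^2 + q^2 - μ*p - μ*q - p*q) * (b - c) = 0 := by
      linear_combination (q - p) * e1 + (p - μ) * e2 + (μ - q) * e3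
    rcases mul_eq_zero.mp key with h | h
    · linarith
    · linarith
  have hs : μ + p + q > 0 := by have h1 : 0 < p := mul_pos hβ (hγ.trans hαγ); have h2 : 0 < q := mul_pos hβ hγ; linarith
  have haval : a = μ / (μ + p + q) := by
    field_simp
    subst hab; rw [hbc] at e1 ⊢
    linarith [e1]
  refine ⟨haval, ?_, ?_⟩ <;> simp [← hab, ← hbc, haval]
end

section
/- Let ω ∈ ℝ, μ > 0, β > 0, α > γ > 0. Suppose u₁, u₂, u₃ are twice continuously differentiable on the closed unit ball, positive on the closed unit ball, satisfy in B₁ the system L_ω u₁ = μu₁(1−u₁) − βαu₁u₂ − βγu₁u₃, L_ω u₂ = μu₂(1−u₂) − βγu₁u₂ − βαu₂u₃, L_ω u₃ = μu₃(1−u₃) − βαu₁u₃ − βγu₂u₃, and have vanishing normal derivative ∂uᵢ/∂n = 0 on ∂B₁ (i.e., the directional derivative of uᵢ in the direction x vanishes for every x ∈ ∂B₁). Then 0 < uᵢ(x) < 1 for every x in the closed unit ball and every i = 1, 2, 3. -/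
noncomputable section

/-- First partial derivative `∂₁u`. -/
def pd1 (u : ℝ × ℝ → ℝ) (x : ℝ × ℝ) : ℝ := fderiv ℝ u x (1, 0)

/-- Second partial derivative `∂₂u`. -/
def pd2 (u : ℝ × ℝ → ℝ) (x : ℝ × ℝ) : ℝ := fderiv ℝ u x (0, 1)

/-- The Laplacian `Δu = ∂₁₁u + ∂₂₂u`. -/
def lap (u : ℝ × ℝ → ℝ) (x : ℝ × ℝ) : ℝ := pd1 (pd1 u) x + pd2 (pd2 u) x

/-- The rotating-frame operator `L_ω u = −Δu + ω x⊥·∇u`. -/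
def Lop (ω : ℝ) (u : ℝ × ℝ → ℝ) (x : ℝ × ℝ) : ℝ :=
  -lap u x + ω * (-x.2 * pd1 u x + x.1 * pd2 u x)

/-- The open unit disk `B₁ ⊂ ℝ²`. -/
def unitBall : Set (ℝ × ℝ) := {x | x.1 ^ 2 + x.2 ^ 2 < 1}

/-- The closed unit disk in `ℝ²`. -/
def unitClosedBall : Set (ℝ × ℝ) := {x | x.1 ^ 2 + x.2 ^ 2 ≤ 1}

/-- The unit circle `∂B₁ ⊂ ℝ²`. -/
def unitSphere : Set (ℝ × ℝ) := {x | x.1 ^ 2 + x.2 ^ 2 = 1}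

/-!
The bound `uᵢ < 1` is a maximum principle for each equation separately: the competition term
`-βα uᵢ uⱼ` is strictly negative, so `L_ω uᵢ < μ uᵢ (1 - uᵢ) ≤ 0` wherever `uᵢ ≥ 1`. The
Neumann condition alone gives no sign at a boundary maximum, so one maximises `uᵢ - ε|x|²`
instead: its outward normal derivative is `-2ε < 0`, hence the maximum is interior, where the
gradient of `uᵢ` is radial (killing the rotation term `ω x⊥·∇uᵢ`) and `Δuᵢ ≤ 4ε`.
-/

open Set Filter Topology

section LocalMax

variable {E : Type*} [NormedAddCommGroup E] [NormedSpace ℝ E] {u q : E → ℝ} {y : E}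

theorem IsLocalMax.deriv_deriv_nonpos {f : ℝ → ℝ} {a : ℝ} (h : IsLocalMax f a)
    (hc : ContinuousAt f a) : deriv (deriv f) a ≤ 0 := by
  by_contra! hpos
  have hmin := isLocalMin_of_deriv_deriv_pos hpos h.deriv_eq_zero hc
  have hconst : f =ᶠ[𝓝 a] fun _ => f a := (h.and hmin).mono fun x hx => le_antisymm hx.1 hx.2
  have hderiv : deriv f =ᶠ[𝓝 a] fun _ => 0 :=
    hconst.eventuallyEq_nhds.mono fun x hx => hx.deriv_eq.trans (deriv_const x (f a))
  simp [hderiv.deriv_eq] at hpos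

theorem IsLocalMax.fderiv_fderiv_apply_self_nonpos (h : IsLocalMax u y) (hu : ContDiffAt ℝ 2 u y)
    (w : E) : fderiv ℝ (fun x => fderiv ℝ u x w) y w ≤ 0 := by
  set line : ℝ → E := fun t => y + t • w
  have hline : ∀ t, HasDerivAt line w t := fun t => by
    have := ((hasDerivAt_id t).smul_const w).const_add y
    rwa [one_smul] at this
  have hline0 : line 0 = y := by simp [line]
  have htends : Tendsto line (𝓝 0) (𝓝 y) := hline0 ▸ (hline 0).continuousAt.tendsto
  have hmax : IsLocalMax (u ∘ line) 0 := by
    simpa [IsLocalMax, IsMaxFilter, Function.comp, hline0] using htends.eventually h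
  have hdiff : ∀ᶠ x in 𝓝 y, DifferentiableAt ℝ u x :=
    (hu.eventually (by simp)).mono fun x hx => hx.differentiableAt (by simp)
  have hderiv : deriv (u ∘ line) =ᶠ[𝓝 0] fun t => fderiv ℝ u (line t) w :=
    (htends.eventually hdiff).mono fun t ht => (ht.hasFDerivAt.comp_hasDerivAt t (hline t)).deriv
  have hdd : HasDerivAt (fun t => fderiv ℝ u (line t) w)
      (fderiv ℝ (fun x => fderiv ℝ u x w) y w) 0 := by
    have hG : DifferentiableAt ℝ (fun x => fderiv ℝ u x w) y :=
      ((hu.fderiv_right (m := 1) (by norm_num)).differentiableAt (by simp)).clm_apply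
        (differentiableAt_const w)
    exact hG.hasFDerivAt.comp_hasDerivAt_of_eq 0 (hline 0) hline0.symm
  rw [← hdd.deriv, ← hderiv.deriv_eq]
  exact hmax.deriv_deriv_nonpos ((hu.continuousAt).comp_of_eq (hline 0).continuousAt hline0)

theorem IsLocalMax.fderiv_eq_of_sub (h : IsLocalMax (fun x => u x - q x) y)
    (hu : DifferentiableAt ℝ u y) (hq : DifferentiableAt ℝ q y) : fderiv ℝ u y = fderiv ℝ q y := by
  have := h.fderiv_eq_zero
  rwa [fderiv_fun_sub hu hq, sub_eq_zero] at this

theorem IsLocalMax.fderiv_fderiv_apply_le_of_sub (h : IsLocalMax (fun x => u x - q x) y)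
    (hu : ContDiffAt ℝ 2 u y) (hq : ContDiffAt ℝ 2 q y) (w : E) :
    fderiv ℝ (fun x => fderiv ℝ u x w) y w ≤ fderiv ℝ (fun x => fderiv ℝ q x w) y w := by
  have hdiff : ∀ {f : E → ℝ}, ContDiffAt ℝ 2 f y → ∀ᶠ x in 𝓝 y, DifferentiableAt ℝ f x :=
    fun hf => (hf.eventually (by simp)).mono fun x hx => hx.differentiableAt (by simp)
  have hdiff' : ∀ {f : E → ℝ}, ContDiffAt ℝ 2 f y →
      DifferentiableAt ℝ (fun x => fderiv ℝ f x w) y :=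
    fun hf => ((hf.fderiv_right (m := 1) (by norm_num)).differentiableAt (by simp)).clm_apply
      (differentiableAt_const w)
  have hsub : (fun x => fderiv ℝ (fun x => u x - q x) x w) =ᶠ[𝓝 y]
      fun x => fderiv ℝ u x w - fderiv ℝ q x w := by
    filter_upwards [hdiff hu, hdiff hq] with x hux hqx
    rw [fderiv_fun_sub hux hqx, sub_apply]
  have := h.fderiv_fderiv_apply_self_nonpos (hu.sub hq) w
  rwa [hsub.fderiv_eq, fderiv_fun_sub (hdiff' hu) (hdiff' hq), sub_apply,
    sub_nonpos] at this

end LocalMax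

theorem isOpen_unitBall : IsOpen unitBall :=
  isOpen_lt (by fun_prop) continuous_const

theorem unitBall_subset_unitClosedBall : unitBall ⊆ unitClosedBall :=
  fun _ hx => le_of_lt (α := ℝ) hx

theorem unitClosedBall_mem_nhds {y : ℝ × ℝ} (hy : y ∈ unitBall) : unitClosedBall ∈ 𝓝 y :=
  mem_of_superset (isOpen_unitBall.mem_nhds hy) unitBall_subset_unitClosedBall

theorem isCompact_unitClosedBall : IsCompact unitClosedBall := by
  refine Metric.isCompact_of_isClosed_isBounded (isClosed_le (by fun_prop) continuous_const)
    ((Metric.isBounded_closedBall (x := 0) (r := 1)).subset fun x hx => ?_)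
  have hx : x.1 ^ 2 + x.2 ^ 2 ≤ 1 := hx
  have h1 : x.1 ^ 2 ≤ 1 := by nlinarith [sq_nonneg x.2]
  have h2 : x.2 ^ 2 ≤ 1 := by nlinarith [sq_nonneg x.1]
  simp only [sq_le_one_iff_abs_le_one] at h1 h2
  simpa [Prod.norm_def] using ⟨h1, h2⟩

theorem fderiv_mul_sq_add_sq (ε : ℝ) (x w : ℝ × ℝ) :
    fderiv ℝ (fun x : ℝ × ℝ => ε * (x.1 ^ 2 + x.2 ^ 2)) x w =
      2 * ε * x.1 * w.1 + 2 * ε * x.2 * w.2 := by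
  have h : HasFDerivAt (fun x : ℝ × ℝ => ε * (x.1 ^ 2 + x.2 ^ 2)) _ x :=
    (((hasFDerivAt_fst (𝕜 := ℝ) (p := x)).pow 2).add
      ((hasFDerivAt_snd (𝕜 := ℝ) (p := x)).pow 2)).const_mul ε
  rw [h.fderiv]
  simp
  ring

theorem fderiv_mul_fst_add_mul_snd (a b : ℝ) (x w : ℝ × ℝ) :
    fderiv ℝ (fun x : ℝ × ℝ => a * x.1 + b * x.2) x w = a * w.1 + b * w.2 := by
  have h : HasFDerivAt (fun x : ℝ × ℝ => a * x.1 + b * x.2) _ x :=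
    ((hasFDerivAt_fst (𝕜 := ℝ) (p := x)).const_mul a).add
      ((hasFDerivAt_snd (𝕜 := ℝ) (p := x)).const_mul b)
  rw [h.fderiv]
  simp

theorem Lop_mul_sq_add_sq (ω ε : ℝ) (x : ℝ × ℝ) :
    Lop ω (fun x => ε * (x.1 ^ 2 + x.2 ^ 2)) x = -(4 * ε) := by
  have h1 : pd1 (fun x => ε * (x.1 ^ 2 + x.2 ^ 2)) = fun x => 2 * ε * x.1 + 0 * x.2 := by
    ext x; simp [pd1, fderiv_mul_sq_add_sq]
  have h2 : pd2 (fun x => ε * (x.1 ^ 2 + x.2 ^ 2)) = fun x => 0 * x.1 + 2 * ε * x.2 := by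
    ext x; simp [pd2, fderiv_mul_sq_add_sq]
  rw [Lop, lap, h1, h2]
  simp only [pd1, pd2, fderiv_mul_fst_add_mul_snd]
  ring

theorem Lop_le_of_isLocalMax_sub {ω : ℝ} {u q : ℝ × ℝ → ℝ} {y : ℝ × ℝ}
    (h : IsLocalMax (fun x => u x - q x) y) (hu : ContDiffAt ℝ 2 u y) (hq : ContDiffAt ℝ 2 q y) :
    Lop ω q y ≤ Lop ω u y := by
  have hgrad := h.fderiv_eq_of_sub (hu.differentiableAt (by simp)) (hq.differentiableAt (by simp))
  have h1 := h.fderiv_fderiv_apply_le_of_sub hu hq (1, 0)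
  have h2 := h.fderiv_fderiv_apply_le_of_sub hu hq (0, 1)
  have hlap : ∀ f, lap f y = fderiv ℝ (fun x => fderiv ℝ f x (1, 0)) y (1, 0) +
      fderiv ℝ (fun x => fderiv ℝ f x (0, 1)) y (0, 1) := fun _ => rfl
  simp only [Lop, hlap, pd1, pd2, hgrad]
  linarith

theorem not_isMaxOn_sub_mul_sq_add_sq {u : ℝ × ℝ → ℝ} {ε : ℝ} (hε : 0 < ε) {x₀ : ℝ × ℝ}
    (hx₀ : x₀ ∈ unitSphere) (hu : DifferentiableWithinAt ℝ u unitClosedBall x₀)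
    (hbc : fderivWithin ℝ u unitClosedBall x₀ x₀ = 0) :
    ¬ IsMaxOn (fun x => u x - ε * (x.1 ^ 2 + x.2 ^ 2)) unitClosedBall x₀ := by
  intro hmax
  have hseg : segment ℝ x₀ 0 ⊆ unitClosedBall := by
    rintro _ ⟨a, b, ha, hb, hab, rfl⟩
    have hx : x₀.1 ^ 2 + x₀.2 ^ 2 = 1 := hx₀
    calc (a * x₀.1 + b * 0) ^ 2 + (a * x₀.2 + b * 0) ^ 2 = a ^ 2 := by
          linear_combination a ^ 2 * hx
      _ ≤ 1 := by nlinarith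
  have hq : DifferentiableAt ℝ (fun x : ℝ × ℝ => ε * (x.1 ^ 2 + x.2 ^ 2)) x₀ := by fun_prop
  have := hmax.localize.hasFDerivWithinAt_nonpos
    (hu.hasFDerivWithinAt.sub hq.hasFDerivAt.hasFDerivWithinAt)
    (sub_mem_posTangentConeAt_of_segment_subset hseg)
  rw [zero_sub, map_neg, sub_apply, hbc, fderiv_mul_sq_add_sq] at this
  have hx : x₀.1 ^ 2 + x₀.2 ^ 2 = 1 := hx₀
  nlinarith

theorem exists_mem_unitBall_forall_sub_le_and_Lop_ge (ω : ℝ) {ε : ℝ} (hε : 0 < ε)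
    {u : ℝ × ℝ → ℝ} (hreg : ContDiffOn ℝ 2 u unitClosedBall)
    (hbc : ∀ x ∈ unitSphere, fderivWithin ℝ u unitClosedBall x x = 0) :
    ∃ y ∈ unitBall, (∀ x ∈ unitClosedBall, u x - ε ≤ u y) ∧ -(4 * ε) ≤ Lop ω u y := by
  set q : ℝ × ℝ → ℝ := fun x => ε * (x.1 ^ 2 + x.2 ^ 2)
  have hqC : ContDiff ℝ 2 q := by fun_prop
  obtain ⟨y, hy, hmax⟩ := isCompact_unitClosedBall.exists_isMaxOn ⟨0, by simp [unitClosedBall]⟩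
    (hreg.continuousOn.sub hqC.continuous.continuousOn)
  have hyball : y ∈ unitBall := (show y.1 ^ 2 + y.2 ^ 2 ≤ 1 from hy).lt_of_ne fun hy₁ =>
    not_isMaxOn_sub_mul_sq_add_sq hε hy₁ (hreg.differentiableOn (by simp) y hy) (hbc y hy₁) hmax
  refine ⟨y, hyball, fun x hx => ?_, ?_⟩
  · have hxy : u x - q x ≤ u y - q y := hmax hx
    have hx : x.1 ^ 2 + x.2 ^ 2 ≤ 1 := hx
    nlinarith [sq_nonneg x.1, sq_nonneg x.2, sq_nonneg y.1, sq_nonneg y.2]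
  · have hnhds := unitClosedBall_mem_nhds hyball
    rw [← Lop_mul_sq_add_sq ω ε y]
    exact Lop_le_of_isLocalMax_sub (hmax.isLocalMax hnhds) (hreg.contDiffAt hnhds) hqC.contDiffAt

theorem lt_one_of_Lop_le_logistic_sub_mul {ω μ c : ℝ} (hμ : 0 ≤ μ) (hc : 0 < c)
    {u z : ℝ × ℝ → ℝ} (hreg : ContDiffOn ℝ 2 u unitClosedBall)
    (hbc : ∀ x ∈ unitSphere, fderivWithin ℝ u unitClosedBall x x = 0)
    (hz : ContinuousOn z unitClosedBall) (hzpos : ∀ x ∈ unitClosedBall, 0 < z x)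
    (hL : ∀ x ∈ unitBall, Lop ω u x ≤ μ * u x * (1 - u x) - c * u x * z x) :
    ∀ x ∈ unitClosedBall, u x < 1 := by
  intro x₁ hx₁
  by_contra! hx₁_ge
  obtain ⟨xm, hxm, hzmin⟩ := isCompact_unitClosedBall.exists_isMinOn ⟨x₁, hx₁⟩ hz
  set m := z xm
  have hm : 0 < m := hzpos xm hxm
  set ε := min (1 / 2) (c * m / (2 * (8 + μ)))
  have hε : 0 < ε := lt_min one_half_pos (by positivity)
  have hε_half : ε ≤ 1 / 2 := min_le_left _ _
  have hε_small : ε * (2 * (8 + μ)) ≤ c * m := (le_div_iff₀ (by positivity)).1 (min_le_right _ _)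
  obtain ⟨y, hy, hnear, hLy⟩ := exists_mem_unitBall_forall_sub_le_and_Lop_ge ω hε hreg hbc
  have huy : 1 - ε ≤ u y := by linarith [hnear x₁ hx₁]
  -- at `y`, `1 - u y ≤ ε` and `z y ≥ m`, so the right-hand side is at most `u y (μ ε - c m) < -4ε`
  have hlogistic : μ * u y * (1 - u y) ≤ μ * u y * ε :=
    mul_le_mul_of_nonneg_left (by linarith) (mul_nonneg hμ (by linarith))
  have hcompet : c * u y * m ≤ c * u y * z y :=
    mul_le_mul_of_nonneg_left (hzmin (unitBall_subset_unitClosedBall hy)) (by nlinarith)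
  have hneg : u y * (μ * ε - c * m) ≤ 1 / 2 * (μ * ε - c * m) :=
    mul_le_mul_of_nonpos_right (by linarith) (by nlinarith)
  linarith [hL y hy, mul_pos hc hm]

/-- Any positive solution of the Neumann problem for the three-component competition
system satisfies `0 < uᵢ < 1` on the closed unit ball. -/
theorem neumann_solution_below_one
    (ω μ β α γ : ℝ) (hμ : 0 < μ) (hβ : 0 < β) (hγ : 0 < γ) (hαγ : γ < α)
    (u₁ u₂ u₃ : ℝ × ℝ → ℝ)
    (hreg₁ : ContDiffOn ℝ 2 u₁ unitClosedBall)
    (hreg₂ : ContDiffOn ℝ 2 u₂ unitClosedBall)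
    (hreg₃ : ContDiffOn ℝ 2 u₃ unitClosedBall)
    (hpos₁ : ∀ x ∈ unitClosedBall, 0 < u₁ x)
    (hpos₂ : ∀ x ∈ unitClosedBall, 0 < u₂ x)
    (hpos₃ : ∀ x ∈ unitClosedBall, 0 < u₃ x)
    (hpde₁ : ∀ x ∈ unitBall,
      Lop ω u₁ x = μ * u₁ x * (1 - u₁ x) - β * α * u₁ x * u₂ x - β * γ * u₁ x * u₃ x)
    (hpde₂ : ∀ x ∈ unitBall,
      Lop ω u₂ x = μ * u₂ x * (1 - u₂ x) - β * γ * u₁ x * u₂ x - β * α * u₂ x * u₃ x)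
    (hpde₃ : ∀ x ∈ unitBall,
      Lop ω u₃ x = μ * u₃ x * (1 - u₃ x) - β * α * u₁ x * u₃ x - β * γ * u₂ x * u₃ x)
    (hbc₁ : ∀ x ∈ unitSphere, fderivWithin ℝ u₁ unitClosedBall x x = 0)
    (hbc₂ : ∀ x ∈ unitSphere, fderivWithin ℝ u₂ unitClosedBall x x = 0)
    (hbc₃ : ∀ x ∈ unitSphere, fderivWithin ℝ u₃ unitClosedBall x x = 0) :
    ∀ x ∈ unitClosedBall, (0 < u₁ x ∧ u₁ x < 1) ∧ (0 < u₂ x ∧ u₂ x < 1) ∧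
      (0 < u₃ x ∧ u₃ x < 1) := by
  have hα : 0 < α := hγ.trans hαγ
  have hβα : 0 < β * α := mul_pos hβ hα
  have hβγ : 0 < β * γ := mul_pos hβ hγ
  have hsub := unitBall_subset_unitClosedBall
  have h₁ := lt_one_of_Lop_le_logistic_sub_mul hμ.le hβα hreg₁ hbc₁ hreg₂.continuousOn hpos₂
    fun x hx => by
      have := mul_pos (mul_pos hβγ (hpos₁ x (hsub hx))) (hpos₃ x (hsub hx))
      linarith [hpde₁ x hx]
  have h₂ := lt_one_of_Lop_le_logistic_sub_mul hμ.le hβα hreg₂ hbc₂ hreg₃.continuousOn hpos₃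
    fun x hx => by
      have := mul_pos (mul_pos hβγ (hpos₁ x (hsub hx))) (hpos₂ x (hsub hx))
      linarith [hpde₂ x hx]
  have h₃ := lt_one_of_Lop_le_logistic_sub_mul hμ.le hβα hreg₃ hbc₃ hreg₁.continuousOn hpos₁
    fun x hx => by
      have := mul_pos (mul_pos hβγ (hpos₂ x (hsub hx))) (hpos₃ x (hsub hx))
      linarith [hpde₃ x hx]
  exact fun x hx => ⟨⟨hpos₁ x hx, h₁ x hx⟩, ⟨hpos₂ x hx, h₂ x hx⟩, ⟨hpos₃ x hx, h₃ x hx⟩⟩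

end
end

section
/- Let α > γ > 0 and μ > 0, and define f(x) = (α³ + γ³)x³ − 3αγμ x² + μ³. Then f(x) > 0 for every x ∈ (0, +∞). Moreover, the minimum of f over (0,+∞) is attained at x = 2αγμ/(α³+γ³) and equals μ³(α³−γ³)²/(α³+γ³)², which is positive. (In particular, the determinant of the matrix M(β) = [[μ, βα, βγ], [βγ, μ, βα], [βα, βγ, μ]], which equals f(β), is positive for all β > 0.) -/
/-- The cubic `f(x) = (α³+γ³)x³ − 3αγμx² + μ³` is positive on `(0,∞)`, its minimum over
`(0,∞)` is attained at `x = 2αγμ/(α³+γ³)` with value `μ³(α³−γ³)²/(α³+γ³)² > 0`; in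
particular the determinant of the circulant matrix `M(β)` is positive for all `β > 0`. -/
theorem cubic_positive_and_min
    (α γ μ : ℝ) (hγ : 0 < γ) (hαγ : γ < α) (hμ : 0 < μ) :
    (∀ x : ℝ, 0 < x → 0 < (α ^ 3 + γ ^ 3) * x ^ 3 - 3 * α * γ * μ * x ^ 2 + μ ^ 3) ∧
    (∀ x : ℝ, 0 < x →
      μ ^ 3 * (α ^ 3 - γ ^ 3) ^ 2 / (α ^ 3 + γ ^ 3) ^ 2 ≤
        (α ^ 3 + γ ^ 3) * x ^ 3 - 3 * α * γ * μ * x ^ 2 + μ ^ 3) ∧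
    ((α ^ 3 + γ ^ 3) * (2 * α * γ * μ / (α ^ 3 + γ ^ 3)) ^ 3 -
        3 * α * γ * μ * (2 * α * γ * μ / (α ^ 3 + γ ^ 3)) ^ 2 + μ ^ 3 =
      μ ^ 3 * (α ^ 3 - γ ^ 3) ^ 2 / (α ^ 3 + γ ^ 3) ^ 2) ∧
    (0 < μ ^ 3 * (α ^ 3 - γ ^ 3) ^ 2 / (α ^ 3 + γ ^ 3) ^ 2) ∧
    (∀ β : ℝ, 0 < β →
      (Matrix.det !![μ, β * α, β * γ; β * γ, μ, β * α; β * α, β * γ, μ] =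
          (α ^ 3 + γ ^ 3) * β ^ 3 - 3 * α * γ * μ * β ^ 2 + μ ^ 3) ∧
        0 < Matrix.det !![μ, β * α, β * γ; β * γ, μ, β * α; β * α, β * γ, μ]) := by
  have hα : 0 < α := hγ.trans hαγ
  have hs : 0 < α ^ 3 + γ ^ 3 := by positivity
  have hsne : (α ^ 3 + γ ^ 3) ≠ 0 := hs.ne'
  have hd : α ^ 3 - γ ^ 3 ≠ 0 := by
    have := pow_lt_pow_left₀ hαγ hγ.le (n := 3) (by norm_num)
    nlinarith
  have hm : 0 < μ ^ 3 * (α ^ 3 - γ ^ 3) ^ 2 / (α ^ 3 + γ ^ 3) ^ 2 := by positivity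
  set x0 : ℝ := 2 * α * γ * μ / (α ^ 3 + γ ^ 3) with hx0
  have hx0pos : 0 < x0 := by positivity
  have key : ∀ x : ℝ,
      (α ^ 3 + γ ^ 3) * x ^ 3 - 3 * α * γ * μ * x ^ 2 + μ ^ 3
        - μ ^ 3 * (α ^ 3 - γ ^ 3) ^ 2 / (α ^ 3 + γ ^ 3) ^ 2
      = (α ^ 3 + γ ^ 3) * (x - x0) ^ 2 * (x + x0 / 2) := by
    intro x
    rw [hx0]
    field_simp
    ring
  have hmin : ∀ x : ℝ, 0 < x →
      μ ^ 3 * (α ^ 3 - γ ^ 3) ^ 2 / (α ^ 3 + γ ^ 3) ^ 2 ≤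
        (α ^ 3 + γ ^ 3) * x ^ 3 - 3 * α * γ * μ * x ^ 2 + μ ^ 3 := by
    intro x hx
    have h := key x
    have hpos : 0 ≤ (α ^ 3 + γ ^ 3) * (x - x0) ^ 2 * (x + x0 / 2) :=
      mul_nonneg (mul_nonneg hs.le (sq_nonneg _)) (by linarith)
    linarith
  refine ⟨fun x hx => lt_of_lt_of_le hm (hmin x hx), hmin, ?_, hm, ?_⟩
  · have h := key x0
    have : (x0 - x0) ^ 2 = 0 := by ring
    nlinarith [key x0]
  · intro β hβ
    have hdet : Matrix.det !![μ, β * α, β * γ; β * γ, μ, β * α; β * α, β * γ, μ] =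
        (α ^ 3 + γ ^ 3) * β ^ 3 - 3 * α * γ * μ * β ^ 2 + μ ^ 3 := by
      simp [Matrix.det_fin_three]
      ring
    exact ⟨hdet, hdet ▸ lt_of_lt_of_le hm (hmin β hβ)⟩
end

section
/- Let ω ∈ ℝ, λ ∈ ℂ, and let k be a nonnegative integer. Suppose f : (0,1) → ℂ is twice differentiable and satisfies f''(r) + f'(r)/r + (λ − iωk − k²/r²)·f(r) = 0 for all r ∈ (0,1). Define u on B₁ ∖ {0} by u(x) = f(|x|)·((x₁ + i x₂)/|x|)^k (so that in polar coordinates u = f(r)e^{ikθ}). Then u is twice continuously differentiable on B₁ ∖ {0} and satisfies −Δu + ω x⊥·∇u = λ·u at every point of B₁ ∖ {0}. -/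
/-!
Write `u = φ(|x|) · w` with `w = (z / |z|)^k = z^k · |x|^(-k)`, `z = x₁ + i x₂`. By the Leibniz
rule `Δu = Δ(φ(|x|)) w + 2 ∇(φ(|x|)) · ∇w + φ(|x|) Δw`. The radial Laplacian is `φ'' + φ'/r`;
the cross term vanishes because `∇(φ(|x|))` is radial while `w` is homogeneous of degree `0`;
and `Δw = -(k²/r²) w`, since `z^k` is holomorphic (hence harmonic) and `Δ|x|^m = m² |x|^(m-2)`.
The rotation field `x⊥ · ∇` annihilates radial functions and acts on `w` as multiplication by
`ik`. Hence `L_ω u = -(φ'' + φ'/r - (k²/r²) φ) w + iωk φ w`, which is `λu` by the ODE. The ODE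
also expresses `f''` through `f` and `f'`, so `f` is `C²` on `(0,1)`.
-/

open Set

noncomputable section

/-- First partial derivative `∂₁u` of a complex-valued function on `ℝ²`. -/
def cpd1 (u : ℝ × ℝ → ℂ) (x : ℝ × ℝ) : ℂ := fderiv ℝ u x (1, 0)

/-- Second partial derivative `∂₂u` of a complex-valued function on `ℝ²`. -/
def cpd2 (u : ℝ × ℝ → ℂ) (x : ℝ × ℝ) : ℂ := fderiv ℝ u x (0, 1)

/-- The Laplacian `Δu = ∂₁₁u + ∂₂₂u` of a complex-valued function. -/
def clap (u : ℝ × ℝ → ℂ) (x : ℝ × ℝ) : ℂ := cpd1 (cpd1 u) x + cpd2 (cpd2 u) x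

/-- The rotating-frame operator `L_ω u = −Δu + ω x⊥·∇u` on complex-valued functions. -/
def cLop (ω : ℝ) (u : ℝ × ℝ → ℂ) (x : ℝ × ℝ) : ℂ :=
  -clap u x + (ω : ℂ) * (-(x.2 : ℂ) * cpd1 u x + (x.1 : ℂ) * cpd2 u x)

section SecondOrder

variable {𝕜 E F : Type*} [NontriviallyNormedField 𝕜] [NormedAddCommGroup E] [NormedSpace 𝕜 E]
  [NormedAddCommGroup F] [NormedSpace 𝕜 F] {f : E → F} {x : E}

theorem ContDiffAt.eventually_differentiableAt (hf : ContDiffAt 𝕜 2 f x) :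
    ∀ᶠ y in nhds x, DifferentiableAt 𝕜 f y :=
  (hf.eventually (by simp)).mono fun _ hy => hy.differentiableAt two_ne_zero

theorem ContDiffAt.differentiableAt_fderiv_apply (hf : ContDiffAt 𝕜 2 f x) (e : E) :
    DifferentiableAt 𝕜 (fun y => fderiv 𝕜 f y e) x :=
  ((hf.fderiv_right (m := 1) le_rfl).differentiableAt one_ne_zero).clm_apply
    (differentiableAt_const e)

end SecondOrder

section PartialDerivatives

variable {u v : ℝ × ℝ → ℂ} {x : ℝ × ℝ}

theorem fderiv_mul_apply (hu : DifferentiableAt ℝ u x) (hv : DifferentiableAt ℝ v x)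
    (e : ℝ × ℝ) :
    fderiv ℝ (fun y => u y * v y) x e = fderiv ℝ u x e * v x + u x * fderiv ℝ v x e := by
  rw [fderiv_fun_mul hu hv]
  simp only [add_apply, smul_apply, smul_eq_mul]
  ring

theorem fderiv_fderiv_mul_apply (hu : ContDiffAt ℝ 2 u x) (hv : ContDiffAt ℝ 2 v x)
    (e : ℝ × ℝ) :
    fderiv ℝ (fun y => fderiv ℝ (fun y => u y * v y) y e) x e =
      fderiv ℝ (fun y => fderiv ℝ u y e) x e * v x
        + 2 * (fderiv ℝ u x e * fderiv ℝ v x e) + u x * fderiv ℝ (fun y => fderiv ℝ v y e) x e := by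
  have hev : (fun y => fderiv ℝ (fun y => u y * v y) y e) =ᶠ[nhds x]
      fun y => fderiv ℝ u y e * v y + u y * fderiv ℝ v y e := by
    filter_upwards [hu.eventually_differentiableAt, hv.eventually_differentiableAt]
      with y hu hv using fderiv_mul_apply hu hv e
  have hu₁ := hu.differentiableAt_fderiv_apply e
  have hv₁ := hv.differentiableAt_fderiv_apply e
  have hu₀ := hu.differentiableAt two_ne_zero
  have hv₀ := hv.differentiableAt two_ne_zero
  rw [hev.fderiv_eq, fderiv_fun_add (hu₁.fun_mul hv₀) (hu₀.fun_mul hv₁), add_apply,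
    fderiv_mul_apply hu₁ hv₀, fderiv_mul_apply hu₀ hv₁]
  ring

theorem cpd1_mul (hu : DifferentiableAt ℝ u x) (hv : DifferentiableAt ℝ v x) :
    cpd1 (fun y => u y * v y) x = cpd1 u x * v x + u x * cpd1 v x :=
  fderiv_mul_apply hu hv _

theorem cpd2_mul (hu : DifferentiableAt ℝ u x) (hv : DifferentiableAt ℝ v x) :
    cpd2 (fun y => u y * v y) x = cpd2 u x * v x + u x * cpd2 v x :=
  fderiv_mul_apply hu hv _

theorem clap_mul (hu : ContDiffAt ℝ 2 u x) (hv : ContDiffAt ℝ 2 v x) :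
    clap (fun y => u y * v y) x =
      clap u x * v x + 2 * (cpd1 u x * cpd1 v x + cpd2 u x * cpd2 v x) + u x * clap v x := by
  unfold clap cpd1 cpd2
  rw [fderiv_fderiv_mul_apply hu hv, fderiv_fderiv_mul_apply hu hv]
  ring

theorem cpd1_ofReal_fst : cpd1 (fun y => (y.1 : ℂ)) x = 1 := by
  rw [cpd1, show (fun y : ℝ × ℝ => (y.1 : ℂ)) = Complex.ofRealCLM.comp (.fst ℝ ℝ ℝ) from rfl,
    ContinuousLinearMap.fderiv]
  simp

theorem cpd2_ofReal_snd : cpd2 (fun y => (y.2 : ℂ)) x = 1 := by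
  rw [cpd2, show (fun y : ℝ × ℝ => (y.2 : ℂ)) = Complex.ofRealCLM.comp (.snd ℝ ℝ ℝ) from rfl,
    ContinuousLinearMap.fderiv]
  simp

end PartialDerivatives

section PlaneNorm

-- The norm of `ℝ × ℝ` is the sup norm, so the Euclidean norm is spelled out.
def planeNorm (x : ℝ × ℝ) : ℝ := √(x.1 ^ 2 + x.2 ^ 2)

variable {x : ℝ × ℝ}

theorem sum_sq_pos_of_ne_zero (hx : x ≠ 0) : 0 < x.1 ^ 2 + x.2 ^ 2 := by
  have : x.1 ≠ 0 ∨ x.2 ≠ 0 := by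
    contrapose! hx
    exact Prod.ext hx.1 hx.2
  rcases this with h | h <;> positivity

theorem planeNorm_pos (hx : x ≠ 0) : 0 < planeNorm x :=
  Real.sqrt_pos.2 (sum_sq_pos_of_ne_zero hx)

theorem ofReal_planeNorm_ne_zero (hx : x ≠ 0) : (planeNorm x : ℂ) ≠ 0 :=
  Complex.ofReal_ne_zero.2 (planeNorm_pos hx).ne'

theorem sq_planeNorm (x : ℝ × ℝ) : planeNorm x ^ 2 = x.1 ^ 2 + x.2 ^ 2 :=
  Real.sq_sqrt (by positivity)

theorem sq_ofReal_planeNorm (x : ℝ × ℝ) : (planeNorm x : ℂ) ^ 2 = x.1 ^ 2 + x.2 ^ 2 := by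
  exact_mod_cast sq_planeNorm x

theorem contDiffAt_planeNorm {n : WithTop ℕ∞} (hx : x ≠ 0) : ContDiffAt ℝ n planeNorm x :=
  ((contDiffAt_fst.pow 2).add (contDiffAt_snd.pow 2)).sqrt (sum_sq_pos_of_ne_zero hx).ne'

theorem fderiv_planeNorm_apply (hx : x ≠ 0) (e : ℝ × ℝ) :
    fderiv ℝ planeNorm x e = (x.1 * e.1 + x.2 * e.2) / planeNorm x := by
  have h₁ : HasFDerivAt (fun y : ℝ × ℝ => y.1) (ContinuousLinearMap.fst ℝ ℝ ℝ) x :=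
    hasFDerivAt_fst
  have h₂ : HasFDerivAt (fun y : ℝ × ℝ => y.2) (ContinuousLinearMap.snd ℝ ℝ ℝ) x :=
    hasFDerivAt_snd
  have hq := (h₁.pow 2).fun_add (h₂.pow 2)
  rw [show planeNorm = fun y : ℝ × ℝ => √(y.1 ^ 2 + y.2 ^ 2) from rfl,
    (hq.sqrt (sum_sq_pos_of_ne_zero hx).ne').fderiv]
  simp only [add_apply, smul_apply, ContinuousLinearMap.coe_fst', ContinuousLinearMap.coe_snd',
    smul_eq_mul, nsmul_eq_mul]
  field_simp
  ring

end PlaneNorm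

section Radial

variable {φ : ℝ → ℂ} {x : ℝ × ℝ}

theorem fderiv_comp_planeNorm_apply (hx : x ≠ 0) (hφ : DifferentiableAt ℝ φ (planeNorm x))
    (e : ℝ × ℝ) :
    fderiv ℝ (fun y => φ (planeNorm y)) x e =
      deriv φ (planeNorm x) * (x.1 * e.1 + x.2 * e.2) / planeNorm x := by
  rw [show (fun y => φ (planeNorm y)) = φ ∘ planeNorm from rfl, (hφ.hasFDerivAt.comp x
    ((contDiffAt_planeNorm hx).differentiableAt one_ne_zero).hasFDerivAt).fderiv,
    ContinuousLinearMap.comp_apply, fderiv_planeNorm_apply hx, fderiv_eq_smul_deriv,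
    Complex.real_smul]
  push_cast
  ring

theorem cpd1_comp_planeNorm (hx : x ≠ 0) (hφ : DifferentiableAt ℝ φ (planeNorm x)) :
    cpd1 (fun y => φ (planeNorm y)) x = deriv φ (planeNorm x) * x.1 / planeNorm x := by
  simp [cpd1, fderiv_comp_planeNorm_apply hx hφ]

theorem cpd2_comp_planeNorm (hx : x ≠ 0) (hφ : DifferentiableAt ℝ φ (planeNorm x)) :
    cpd2 (fun y => φ (planeNorm y)) x = deriv φ (planeNorm x) * x.2 / planeNorm x := by
  simp [cpd2, fderiv_comp_planeNorm_apply hx hφ]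

theorem clap_comp_planeNorm (hx : x ≠ 0) (hφ : ContDiffAt ℝ 2 φ (planeNorm x)) :
    clap (fun y => φ (planeNorm y)) x =
      deriv (deriv φ) (planeNorm x) + deriv φ (planeNorm x) / planeNorm x := by
  set r := planeNorm x with hr
  have hr₀ : (r : ℂ) ≠ 0 := ofReal_planeNorm_ne_zero hx
  have hnear : ∀ᶠ y in nhds x, y ≠ 0 ∧ DifferentiableAt ℝ φ (planeNorm y) :=
    (eventually_ne_nhds hx).and
      ((contDiffAt_planeNorm (n := 1) hx).continuousAt.eventually hφ.eventually_differentiableAt)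
  -- `∇(φ(|y|)) = ψ(|y|) y`, so the Laplacian is computed from first derivatives of `ψ`.
  set ψ : ℝ → ℂ := fun t => deriv φ t / t
  have hψ : HasDerivAt ψ ((deriv (deriv φ) r * r - deriv φ r) / r ^ 2) r := by
    simpa using ((hφ.derivWithin (m := 1) le_rfl).differentiableAt one_ne_zero).hasDerivAt.fun_div
      (hasDerivAt_id r).ofReal_comp hr₀
  have hψN : DifferentiableAt ℝ (fun y => ψ (planeNorm y)) x :=
    hψ.differentiableAt.comp (g := ψ) x ((contDiffAt_planeNorm hx).differentiableAt one_ne_zero)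
  have h₁ : cpd1 (fun y => φ (planeNorm y)) =ᶠ[nhds x] fun y => ψ (planeNorm y) * y.1 := by
    filter_upwards [hnear] with y ⟨hy, hφy⟩
    rw [cpd1_comp_planeNorm hy hφy]
    ring
  have h₂ : cpd2 (fun y => φ (planeNorm y)) =ᶠ[nhds x] fun y => ψ (planeNorm y) * y.2 := by
    filter_upwards [hnear] with y ⟨hy, hφy⟩
    rw [cpd2_comp_planeNorm hy hφy]
    ring
  rw [clap, cpd1, cpd2, h₁.fderiv_eq, h₂.fderiv_eq, ← cpd1, ← cpd2,
    cpd1_mul hψN (by fun_prop), cpd2_mul hψN (by fun_prop), cpd1_ofReal_fst, cpd2_ofReal_snd,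
    cpd1_comp_planeNorm hx hψ.differentiableAt, cpd2_comp_planeNorm hx hψ.differentiableAt,
    hψ.deriv]
  simp only [ψ, ← hr]
  field_simp
  linear_combination (deriv φ r - deriv (deriv φ) r * r) * sq_ofReal_planeNorm x

end Radial

section Holomorphic

open Complex

variable {F : ℂ → ℂ} {x : ℝ × ℝ}

theorem equivRealProdCLM_symm_ne_zero (hx : x ≠ 0) : equivRealProdCLM.symm x ≠ 0 :=
  (map_ne_zero_iff _ equivRealProdCLM.symm.injective).2 hx

theorem fderiv_comp_equivRealProdCLM_symm_apply
    (hF : DifferentiableAt ℂ F (equivRealProdCLM.symm x)) (e : ℝ × ℝ) :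
    fderiv ℝ (fun y => F (equivRealProdCLM.symm y)) x e =
      deriv F (equivRealProdCLM.symm x) * equivRealProdCLM.symm e := by
  rw [show (fun y => F (equivRealProdCLM.symm y)) = F ∘ equivRealProdCLM.symm from rfl,
    ((hF.hasDerivAt.hasFDerivAt.restrictScalars ℝ).comp x
      equivRealProdCLM.symm.hasFDerivAt).fderiv]
  simp [mul_comm]

theorem cpd1_comp_equivRealProdCLM_symm (hF : DifferentiableAt ℂ F (equivRealProdCLM.symm x)) :
    cpd1 (fun y => F (equivRealProdCLM.symm y)) x = deriv F (equivRealProdCLM.symm x) := by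
  rw [cpd1, fderiv_comp_equivRealProdCLM_symm_apply hF]
  simp [equivRealProdCLM_symm_apply]

theorem cpd2_comp_equivRealProdCLM_symm (hF : DifferentiableAt ℂ F (equivRealProdCLM.symm x)) :
    cpd2 (fun y => F (equivRealProdCLM.symm y)) x = deriv F (equivRealProdCLM.symm x) * I := by
  rw [cpd2, fderiv_comp_equivRealProdCLM_symm_apply hF]
  simp [equivRealProdCLM_symm_apply]

theorem clap_comp_equivRealProdCLM_symm (hF : Differentiable ℂ F) :
    clap (fun y => F (equivRealProdCLM.symm y)) x = 0 := by
  have h₁ : cpd1 (fun y => F (equivRealProdCLM.symm y)) =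
      fun y => deriv F (equivRealProdCLM.symm y) :=
    funext fun y => cpd1_comp_equivRealProdCLM_symm (hF _)
  have h₂ : cpd2 (fun y => F (equivRealProdCLM.symm y)) =
      fun y => (fun w => deriv F w * I) (equivRealProdCLM.symm y) :=
    funext fun y => cpd2_comp_equivRealProdCLM_symm (hF _)
  rw [clap, h₁, h₂, cpd1_comp_equivRealProdCLM_symm (hF.deriv _),
    cpd2_comp_equivRealProdCLM_symm ((hF.deriv _).mul_const I), deriv_mul_const (hF.deriv _)]
  linear_combination deriv (deriv F) (equivRealProdCLM.symm x) * I_mul_I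

end Holomorphic

section RadialPowers

variable {t : ℝ} {x : ℝ × ℝ}

theorem hasDerivAt_ofReal_zpow (m : ℤ) (ht : t ≠ 0) :
    HasDerivAt (fun s : ℝ => (s : ℂ) ^ m) (m * (t : ℂ) ^ (m - 1)) t :=
  (hasDerivAt_zpow m (t : ℂ) (.inl (Complex.ofReal_ne_zero.2 ht))).comp_ofReal

theorem deriv_deriv_ofReal_zpow (m : ℤ) (ht : t ≠ 0) :
    deriv (deriv fun s : ℝ => (s : ℂ) ^ m) t = m * (m - 1) * (t : ℂ) ^ (m - 2) := by
  have h : deriv (fun s : ℝ => (s : ℂ) ^ m) =ᶠ[nhds t] fun s => m * (s : ℂ) ^ (m - 1) := by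
    filter_upwards [eventually_ne_nhds ht] with s hs using (hasDerivAt_ofReal_zpow m hs).deriv
  rw [h.deriv_eq, ((hasDerivAt_ofReal_zpow (m - 1) ht).const_mul (m : ℂ)).deriv]
  rw [sub_sub, one_add_one_eq_two]
  push_cast
  ring

theorem contDiffAt_ofReal_zpow {n : WithTop ℕ∞} (m : ℤ) (ht : t ≠ 0) :
    ContDiffAt ℝ n (fun s : ℝ => (s : ℂ) ^ m) t := by
  obtain ⟨k, rfl | rfl⟩ := Int.eq_nat_or_neg m
  · simp only [zpow_natCast]
    exact Complex.ofRealCLM.contDiff.contDiffAt.pow k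
  · simp only [zpow_neg, zpow_natCast]
    exact (Complex.ofRealCLM.contDiff.contDiffAt.pow k).inv
      (pow_ne_zero _ (Complex.ofReal_ne_zero.2 ht))

theorem clap_planeNorm_zpow (m : ℤ) (hx : x ≠ 0) :
    clap (fun y => (planeNorm y : ℂ) ^ m) x = m ^ 2 * (planeNorm x : ℂ) ^ (m - 2) := by
  have hr := (planeNorm_pos hx).ne'
  have hr' := ofReal_planeNorm_ne_zero hx
  rw [clap_comp_planeNorm (φ := fun s : ℝ => (s : ℂ) ^ m) hx (contDiffAt_ofReal_zpow m hr),
    deriv_deriv_ofReal_zpow m hr, (hasDerivAt_ofReal_zpow m hr).deriv]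
  rw [show m - 2 = m - 1 - 1 by ring, zpow_sub_one₀ hr']
  ring

end RadialPowers

section AngularMode

open Complex

variable {x : ℝ × ℝ}

theorem natCast_mul_pow_sub_one {K : Type*} [Field K] (k : ℕ) {z : K} (hz : z ≠ 0) :
    (k : K) * z ^ (k - 1) = k * z ^ k / z := by
  cases k with
  | zero => simp
  | succ k => rw [Nat.add_sub_cancel, pow_succ]; field_simp

theorem contDiff_equivRealProdCLM_symm_pow {n : WithTop ℕ∞} (k : ℕ) :
    ContDiff ℝ n fun y => equivRealProdCLM.symm y ^ k :=
  ((contDiff_id.pow k : ContDiff ℂ n fun w : ℂ => w ^ k).restrict_scalars ℝ).comp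
    equivRealProdCLM.symm.contDiff

theorem contDiffAt_planeNorm_zpow {n : WithTop ℕ∞} (m : ℤ) (hx : x ≠ 0) :
    ContDiffAt ℝ n (fun y => (planeNorm y : ℂ) ^ m) x :=
  (contDiffAt_ofReal_zpow m (planeNorm_pos hx).ne').comp x (contDiffAt_planeNorm hx)

def angularMode (k : ℕ) (x : ℝ × ℝ) : ℂ :=
  (((x.1 : ℂ) + I * (x.2 : ℂ)) / ((planeNorm x : ℝ) : ℂ)) ^ k

-- `e^{ikθ} = z^k · |x|^(-k)`: a holomorphic factor times a radial one.
theorem angularMode_eq_mul (k : ℕ) :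
    angularMode k =
      fun y => equivRealProdCLM.symm y ^ k * (planeNorm y : ℂ) ^ (-(k : ℤ)) := by
  funext y
  simp only [angularMode, equivRealProdCLM_symm_apply, div_pow, zpow_neg, zpow_natCast]
  ring

variable (k : ℕ)

theorem contDiffAt_angularMode {n : WithTop ℕ∞} (hx : x ≠ 0) :
    ContDiffAt ℝ n (angularMode k) x := by
  rw [angularMode_eq_mul]
  exact (contDiff_equivRealProdCLM_symm_pow k).contDiffAt.mul (contDiffAt_planeNorm_zpow _ hx)

theorem fderiv_angularMode_apply (hx : x ≠ 0) (e : ℝ × ℝ) :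
    fderiv ℝ (angularMode k) x e = k * angularMode k x *
      (equivRealProdCLM.symm e / equivRealProdCLM.symm x -
        (x.1 * e.1 + x.2 * e.2) / planeNorm x ^ 2) := by
  have hr := (planeNorm_pos hx).ne'
  have hr' := ofReal_planeNorm_ne_zero hx
  have hz := equivRealProdCLM_symm_ne_zero hx
  rw [angularMode_eq_mul, fderiv_mul_apply
    ((contDiff_equivRealProdCLM_symm_pow k).differentiable one_ne_zero _)
    ((contDiffAt_planeNorm_zpow _ hx).differentiableAt one_ne_zero),
    fderiv_comp_equivRealProdCLM_symm_apply (F := fun w => w ^ k) (differentiableAt_pow k),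
    fderiv_comp_planeNorm_apply (φ := fun s : ℝ => (s : ℂ) ^ (-(k : ℤ))) hx
      (hasDerivAt_ofReal_zpow _ hr).differentiableAt, (hasDerivAt_ofReal_zpow _ hr).deriv,
    deriv_pow_field, natCast_mul_pow_sub_one k hz, zpow_sub_one₀ hr']
  push_cast
  field_simp
  ring

theorem cpd1_angularMode (hx : x ≠ 0) :
    cpd1 (angularMode k) x =
      k * angularMode k x * ((equivRealProdCLM.symm x)⁻¹ - x.1 / planeNorm x ^ 2) := by
  simp [cpd1, fderiv_angularMode_apply k hx, equivRealProdCLM_symm_apply]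

theorem cpd2_angularMode (hx : x ≠ 0) :
    cpd2 (angularMode k) x =
      k * angularMode k x * (I / equivRealProdCLM.symm x - x.2 / planeNorm x ^ 2) := by
  simp [cpd2, fderiv_angularMode_apply k hx, equivRealProdCLM_symm_apply]

theorem euler_angularMode (hx : x ≠ 0) :
    (x.1 : ℂ) * cpd1 (angularMode k) x + (x.2 : ℂ) * cpd2 (angularMode k) x = 0 := by
  have hz := equivRealProdCLM_symm_ne_zero hx
  have hr' := ofReal_planeNorm_ne_zero hx
  rw [cpd1_angularMode k hx, cpd2_angularMode k hx]
  simp only [equivRealProdCLM_symm_apply] at hz ⊢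
  field_simp
  linear_combination k * angularMode k x * (x.1 + x.2 * I) * sq_ofReal_planeNorm x

theorem rotation_angularMode (hx : x ≠ 0) :
    -(x.2 : ℂ) * cpd1 (angularMode k) x + (x.1 : ℂ) * cpd2 (angularMode k) x =
      I * k * angularMode k x := by
  have hz := equivRealProdCLM_symm_ne_zero hx
  have hr' := ofReal_planeNorm_ne_zero hx
  rw [cpd1_angularMode k hx, cpd2_angularMode k hx]
  simp only [equivRealProdCLM_symm_apply] at hz ⊢
  field_simp
  linear_combination -k * angularMode k x * x.2 * planeNorm x ^ 2 * I_sq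

theorem clap_angularMode (hx : x ≠ 0) :
    clap (angularMode k) x = -(k ^ 2 / planeNorm x ^ 2) * angularMode k x := by
  have hr := (planeNorm_pos hx).ne'
  have hr' := ofReal_planeNorm_ne_zero hx
  have hz := equivRealProdCLM_symm_ne_zero hx
  have hP := (hasDerivAt_ofReal_zpow (-(k : ℤ)) hr).differentiableAt
  rw [angularMode_eq_mul, clap_mul (contDiff_equivRealProdCLM_symm_pow k).contDiffAt
    (contDiffAt_planeNorm_zpow _ hx),
    clap_comp_equivRealProdCLM_symm (F := fun w => w ^ k) (differentiable_pow k),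
    clap_planeNorm_zpow _ hx,
    cpd1_comp_equivRealProdCLM_symm (F := fun w => w ^ k) (differentiableAt_pow k),
    cpd2_comp_equivRealProdCLM_symm (F := fun w => w ^ k) (differentiableAt_pow k),
    cpd1_comp_planeNorm (φ := fun s : ℝ => (s : ℂ) ^ (-(k : ℤ))) hx hP,
    cpd2_comp_planeNorm (φ := fun s : ℝ => (s : ℂ) ^ (-(k : ℤ))) hx hP,
    (hasDerivAt_ofReal_zpow _ hr).deriv, deriv_pow_field, natCast_mul_pow_sub_one k hz,
    zpow_sub_one₀ hr', show -(k : ℤ) - 2 = -k - 1 - 1 by ring, zpow_sub_one₀ hr', zpow_sub_one₀ hr']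
  simp only [equivRealProdCLM_symm_apply] at hz ⊢
  push_cast
  field_simp
  ring

end AngularMode

section Bessel

theorem contDiffOn_two_of_continuousOn_deriv_deriv {E : Type*} [NormedAddCommGroup E]
    [NormedSpace ℝ E] {f : ℝ → E} {s : Set ℝ} (hs : IsOpen s) (hf : DifferentiableOn ℝ f s)
    (hf' : DifferentiableOn ℝ (deriv f) s) (hf'' : ContinuousOn (deriv (deriv f)) s) :
    ContDiffOn ℝ 2 f s := by
  rw [show (2 : WithTop ℕ∞) = 1 + 1 from rfl, contDiffOn_succ_iff_deriv_of_isOpen hs,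
    show (1 : WithTop ℕ∞) = 0 + 1 from rfl, contDiffOn_succ_iff_deriv_of_isOpen hs,
    contDiffOn_zero]
  exact ⟨hf, by simp, hf', by simp, hf''⟩

variable {f : ℝ → ℂ} {c a : ℂ}

theorem contDiffOn_two_of_bessel {s : Set ℝ} (hs : IsOpen s) (h₀ : (0 : ℝ) ∉ s)
    (hf : DifferentiableOn ℝ f s) (hf' : DifferentiableOn ℝ (deriv f) s)
    (hode : ∀ r ∈ s, deriv (deriv f) r + deriv f r / r + (c - a / (r : ℂ) ^ 2) * f r = 0) :
    ContDiffOn ℝ 2 f s := by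
  refine contDiffOn_two_of_continuousOn_deriv_deriv hs hf hf' ?_
  have hr : ∀ r ∈ s, (r : ℂ) ≠ 0 := fun r hr =>
    Complex.ofReal_ne_zero.2 (ne_of_mem_of_not_mem hr h₀)
  have hcont : ContinuousOn (fun r : ℝ => -(deriv f r / r + (c - a / (r : ℂ) ^ 2) * f r)) s :=
    ((hf'.continuousOn.div Complex.continuous_ofReal.continuousOn hr).add
      ((continuousOn_const.sub (continuousOn_const.div
        (Complex.continuous_ofReal.continuousOn.pow 2) fun r h => pow_ne_zero 2 (hr r h))).mul
          hf.continuousOn)).neg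
  exact hcont.congr fun r h => by linear_combination hode r h

theorem cLop_mul_angularMode_of_bessel {ω : ℝ} {lam : ℂ} {k : ℕ} {φ : ℝ → ℂ} {x : ℝ × ℝ}
    (hx : x ≠ 0) (hφ : ContDiffAt ℝ 2 φ (planeNorm x))
    (hode : deriv (deriv φ) (planeNorm x) + deriv φ (planeNorm x) / (planeNorm x : ℂ) +
      (lam - Complex.I * ω * k - (k : ℂ) ^ 2 / (planeNorm x : ℂ) ^ 2) * φ (planeNorm x) = 0) :
    cLop ω (fun y => φ (planeNorm y) * angularMode k y) x =
      lam * (φ (planeNorm x) * angularMode k x) := by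
  have hR : ContDiffAt ℝ 2 (fun y => φ (planeNorm y)) x := hφ.comp x (contDiffAt_planeNorm hx)
  have hw : ContDiffAt ℝ 2 (angularMode k) x := contDiffAt_angularMode k hx
  have hφ₁ := hφ.differentiableAt two_ne_zero
  have hR₁ := hR.differentiableAt two_ne_zero
  have hw₁ := hw.differentiableAt two_ne_zero
  rw [cLop, clap_mul hR hw, cpd1_mul hR₁ hw₁, cpd2_mul hR₁ hw₁, clap_comp_planeNorm hx hφ,
    cpd1_comp_planeNorm hx hφ₁, cpd2_comp_planeNorm hx hφ₁, clap_angularMode k hx]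
  -- the cross term of the Leibniz rule is a multiple of the Euler identity for `w`
  linear_combination -angularMode k x * hode
    - 2 * deriv φ (planeNorm x) / planeNorm x * euler_angularMode k hx
    + ω * φ (planeNorm x) * rotation_angularMode k hx

end Bessel

/-- Construction of the eigenfunctions of `L_ω`: if `f` solves the Bessel-type ODE
`f'' + f'/r + (λ − iωk − k²/r²)f = 0` on `(0,1)`, then `u = f(r)e^{ikθ}`, i.e.
`u(x) = f(|x|)((x₁+ix₂)/|x|)^k`, is twice continuously differentiable on `B₁ ∖ {0}`
and satisfies `−Δu + ω x⊥·∇u = λu` there. -/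
theorem bessel_mode_is_eigenfunction
    (ω : ℝ) (lam : ℂ) (k : ℕ) (f : ℝ → ℂ)
    (hfdiff : ∀ r ∈ Ioo (0 : ℝ) 1, DifferentiableAt ℝ f r ∧ DifferentiableAt ℝ (deriv f) r)
    (hfode : ∀ r ∈ Ioo (0 : ℝ) 1,
      deriv (deriv f) r + deriv f r / (r : ℂ) +
        (lam - Complex.I * (ω : ℂ) * (k : ℂ) - (k : ℂ) ^ 2 / (r : ℂ) ^ 2) * f r = 0) :
    ContDiffOn ℝ 2
      (fun x : ℝ × ℝ =>
        f (Real.sqrt (x.1 ^ 2 + x.2 ^ 2)) *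
          (((x.1 : ℂ) + Complex.I * (x.2 : ℂ)) /
            ((Real.sqrt (x.1 ^ 2 + x.2 ^ 2) : ℝ) : ℂ)) ^ k)
      (unitBall \ {(0 : ℝ × ℝ)}) ∧
    ∀ x ∈ unitBall \ {(0 : ℝ × ℝ)},
      cLop ω
          (fun x : ℝ × ℝ =>
            f (Real.sqrt (x.1 ^ 2 + x.2 ^ 2)) *
              (((x.1 : ℂ) + Complex.I * (x.2 : ℂ)) /
                ((Real.sqrt (x.1 ^ 2 + x.2 ^ 2) : ℝ) : ℂ)) ^ k)
          x =
        lam *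
          (f (Real.sqrt (x.1 ^ 2 + x.2 ^ 2)) *
            (((x.1 : ℂ) + Complex.I * (x.2 : ℂ)) /
              ((Real.sqrt (x.1 ^ 2 + x.2 ^ 2) : ℝ) : ℂ)) ^ k) := by
  have hf : ContDiffOn ℝ 2 f (Ioo 0 1) :=
    contDiffOn_two_of_bessel isOpen_Ioo (fun h => lt_irrefl 0 h.1)
      (fun r hr => (hfdiff r hr).1.differentiableWithinAt)
      (fun r hr => (hfdiff r hr).2.differentiableWithinAt) hfode
  have hS : ∀ x ∈ unitBall \ {(0 : ℝ × ℝ)}, x ≠ 0 ∧ planeNorm x ∈ Ioo 0 1 := fun x hx =>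
    ⟨hx.2, planeNorm_pos hx.2, (Real.sqrt_lt' one_pos).2 (by rw [one_pow]; exact hx.1)⟩
  have hfS : ∀ x ∈ unitBall \ {(0 : ℝ × ℝ)}, ContDiffAt ℝ 2 f (planeNorm x) := fun x hx =>
    hf.contDiffAt (isOpen_Ioo.mem_nhds (hS x hx).2)
  refine ⟨fun x hx => ?_, fun x hx => ?_⟩
  · exact ((hfS x hx).comp x (contDiffAt_planeNorm (hS x hx).1)).mul
      (contDiffAt_angularMode k (hS x hx).1) |>.contDiffWithinAt
  · exact cLop_mul_angularMode_of_bessel (hS x hx).1 (hfS x hx) (hfode _ (hS x hx).2)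
end
end
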